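/- Let $P(\rho) = \rho \int_1^{\rho} p(s)/s^2\,ds$ with $p(\rho)=\rho^\gamma$, $\gamma>1$, and fix $r>0$. Then there exists $C>0$ such that $P(\rho)-P'(r)(\rho-r)-P(r) \geq C(1+\rho^\gamma)$ for all $\rho \geq 0$ with $\rho \leq r/2$ or $\rho \geq 2r$. -/
import Mathlib


open MeasureTheory intervalIntegral

/-- Pressure potential `P(ρ) = ρ ∫_1^ρ p(s)/s² ds` for `p(s) = s^γ`. -/
noncomputable def pressurePotential (γ : ℝ) (ρ : ℝ) : ℝ :=
  ρ * ∫ s in (1:ℝ)..ρ, s ^ γ / s ^ 2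

lemma pp_eq {γ : ℝ} (hγ : 1 < γ) {ρ : ℝ} (hρ : 0 < ρ) :
    pressurePotential γ ρ = (ρ ^ γ - ρ) / (γ - 1) := by
  have h1 : γ - 1 ≠ 0 := by linarith
  have hint : (∫ s in (1:ℝ)..ρ, s ^ γ / s ^ 2) = ∫ s in (1:ℝ)..ρ, s ^ (γ - 2) := by
    apply intervalIntegral.integral_congr
    intro s hs
    have hs0 : 0 < s := by
      rcases Set.mem_uIcc.mp hs with h | h
      · linarith [h.1]
      · linarith [h.1]
    show s ^ γ / s ^ 2 = s ^ (γ - 2)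
    rw [Real.rpow_sub hs0]
    congr 1
    rw [← Real.rpow_natCast s 2]
    norm_num
  have hval : (∫ s in (1:ℝ)..ρ, s ^ (γ - 2)) = (ρ ^ (γ - 1) - 1) / (γ - 1) := by
    rw [integral_rpow (Or.inl (by linarith)), show γ - 2 + 1 = γ - 1 by ring,
      Real.one_rpow]
  have hpow : ρ ^ (γ - 1) = ρ ^ γ / ρ := Real.rpow_sub_one hρ.ne' γ
  rw [pressurePotential, hint, hval, hpow]
  field_simp

lemma pp_deriv {γ : ℝ} (hγ : 1 < γ) {r : ℝ} (hr : 0 < r) :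
    deriv (pressurePotential γ) r = (γ * r ^ (γ - 1) - 1) / (γ - 1) := by
  have hd : HasDerivAt (fun ρ : ℝ => (ρ ^ γ - ρ) / (γ - 1))
      ((γ * r ^ (γ - 1) - 1) / (γ - 1)) r := by
    have h1 : HasDerivAt (fun ρ : ℝ => ρ ^ γ) (γ * r ^ (γ - 1)) r :=
      Real.hasDerivAt_rpow_const (Or.inl hr.ne')
    exact ((h1.sub (hasDerivAt_id r)).div_const (γ - 1))
  have hev : pressurePotential γ =ᶠ[nhds r] fun ρ => (ρ ^ γ - ρ) / (γ - 1) := by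
    filter_upwards [eventually_gt_nhds hr] with x hx
    exact pp_eq hγ hx
  rw [Filter.EventuallyEq.deriv_eq hev]
  exact hd.deriv

/-- Bernoulli / tangent line inequality for rpow. -/
lemma bern {γ : ℝ} (hγ : 1 < γ) {a x : ℝ} (ha : 0 < a) (hx : 0 ≤ x) :
    a ^ γ + γ * a ^ (γ - 1) * (x - a) ≤ x ^ γ := by
  have hs : -1 ≤ x / a - 1 := by
    have : 0 ≤ x / a := div_nonneg hx ha.le
    linarith
  have h := one_add_mul_self_le_rpow_one_add hs hγ.le
  have hxa : (1 + (x / a - 1)) = x / a := by ring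
  rw [hxa, Real.div_rpow hx ha.le] at h
  have haγ : 0 < a ^ γ := Real.rpow_pos_of_pos ha γ
  have hsub : a ^ (γ - 1) = a ^ γ / a := Real.rpow_sub_one ha.ne' γ
  rw [hsub]
  have h2 := mul_le_mul_of_nonneg_left h haγ.le
  rw [mul_div_cancel₀ _ (ne_of_gt haγ)] at h2
  have hane : a ≠ 0 := ha.ne'
  have : a ^ γ * (1 + γ * (x / a - 1)) = a ^ γ + γ * (a ^ γ / a) * (x - a) := by
    field_simp
  linarith [this ▸ h2]

set_option maxHeartbeats 1000000 in
theorem bregman_lower_bound_far_field (γ : ℝ) (hγ : 1 < γ) (r : ℝ) (hr : 0 < r) :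
    ∃ C > 0, ∀ ρ : ℝ, 0 ≤ ρ → (ρ ≤ r / 2 ∨ 2 * r ≤ ρ) →
      pressurePotential γ ρ - deriv (pressurePotential γ) r * (ρ - r)
          - pressurePotential γ r ≥ C * (1 + ρ ^ γ) := by
  have hγ1 : (0:ℝ) < γ - 1 := by linarith
  set E := r ^ (γ - 1) with hE
  set B := r ^ γ with hB
  set T := (2:ℝ) ^ γ with hT
  have hE0 : 0 < E := Real.rpow_pos_of_pos hr _
  have hB0 : 0 < B := Real.rpow_pos_of_pos hr _
  have hT0 : 0 < T := Real.rpow_pos_of_pos two_pos _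
  clear_value E B T
  have hBrE : B = r * E := by
    rw [hB, hE, mul_comm r (r ^ (γ - 1)), ← Real.rpow_add_one hr.ne', sub_add_cancel]
  have hT_gt : 1 + γ < T := by
    have h := one_add_mul_self_lt_rpow_one_add (s := 1) (by norm_num) one_ne_zero hγ
    norm_num at h
    rw [hT]
    linarith
  have hT2 : T = 2 * (2:ℝ) ^ (γ - 1) := by
    rw [hT]
    nth_rewrite 1 [show γ = (γ - 1) + 1 by ring]
    rw [Real.rpow_add_one (by norm_num : (2:ℝ) ≠ 0)]
    ring
  -- δ > 0
  have hδ : 0 < γ / 2 - 1 + 1 / T := by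
    rcases le_or_gt 2 γ with h2 | h2
    · have : 0 < 1 / T := by positivity
      linarith
    · have hx0 : 0 < γ - 1 := hγ1
      have hexp : (2:ℝ) ^ (γ - 1) = Real.exp ((γ - 1) * Real.log 2) := by
        rw [Real.rpow_def_of_pos two_pos]; ring_nf
      have h1x : 2 - γ ≤ Real.exp (-(γ - 1)) := by
        have := Real.add_one_le_exp (-(γ - 1))
        linarith
      have hpos : 0 < (2:ℝ) ^ (γ - 1) := Real.rpow_pos_of_pos two_pos _
      have hkey : (2:ℝ) ^ (γ - 1) * (2 - γ) < 1 := by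
        calc (2:ℝ) ^ (γ - 1) * (2 - γ)
            ≤ Real.exp ((γ - 1) * Real.log 2) * Real.exp (-(γ - 1)) := by
              rw [← hexp]
              exact mul_le_mul_of_nonneg_left h1x hpos.le
          _ = Real.exp ((γ - 1) * Real.log 2 - (γ - 1)) := by
              rw [← Real.exp_add]; ring_nf
          _ < 1 := by
              rw [Real.exp_lt_one_iff]
              have hlog : Real.log 2 < 1 := by
                have := Real.log_two_lt_d9
                linarith
              nlinarith
      -- T * (1 - γ/2) < 1, hence 1 - γ/2 < 1/T
      have hTlt : T * (1 - γ / 2) < 1 := by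
        rw [hT2]; nlinarith
      have : 1 - γ / 2 < 1 / T := by
        rw [lt_div_iff₀ hT0]; nlinarith
      linarith
  -- constants
  set δ := γ / 2 - 1 + 1 / T with hδdef
  set κ := (T - 1 - γ) / T with hκdef
  have hκ0 : 0 < κ := div_pos (by linarith) hT0
  set C₁ := B * δ / ((γ - 1) * (1 + B / T)) with hC₁
  set C₂ := κ / ((γ - 1) * (1 + 1 / (T * B))) with hC₂
  have hden₁ : 0 < (γ - 1) * (1 + B / T) := by positivity
  have hden₂ : 0 < (γ - 1) * (1 + 1 / (T * B)) := by positivity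
  have hC₁0 : 0 < C₁ := div_pos (mul_pos hB0 hδ) hden₁
  have hC₂0 : 0 < C₂ := div_pos hκ0 hden₂
  refine ⟨min C₁ C₂, lt_min hC₁0 hC₂0, ?_⟩
  intro ρ hρ0 hcase
  set A := ρ ^ γ with hA
  have hA0 : 0 ≤ A := Real.rpow_nonneg hρ0 _
  clear_value A
  -- rewrite the Bregman divergence
  have hD : pressurePotential γ ρ - deriv (pressurePotential γ) r * (ρ - r)
      - pressurePotential γ r = (A - B - γ * E * (ρ - r)) / (γ - 1) := by
    rcases eq_or_lt_of_le hρ0 with h0 | h0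
    · have hP0 : pressurePotential γ 0 = 0 := by simp [pressurePotential]
      have hA0' : A = 0 := by
        rw [hA, ← h0, Real.zero_rpow (by linarith : γ ≠ 0)]
      rw [← h0, hP0, pp_deriv hγ hr, pp_eq hγ hr, hA0']
      rw [← hB, ← hE]
      field_simp
      ring
    · rw [pp_eq hγ h0, pp_deriv hγ hr, pp_eq hγ hr, ← hA, ← hB, ← hE]
      field_simp
      ring
  rw [hD, ge_iff_le, le_div_iff₀ hγ1]
  -- key inequality: min C₁ C₂ * (1+A) * (γ-1) ≤ A - B - γE(ρ-r)
  rcases hcase with hnear | hfar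
  · -- near field : ρ ≤ r/2
    have hbern := bern hγ (by positivity : (0:ℝ) < r / 2) hρ0
    have e1 : (r / 2) ^ γ = B / T := by
      rw [hB, hT, ← Real.div_rpow hr.le (by norm_num)]
    have e2 : (r / 2) ^ (γ - 1) = 2 * E / T := by
      rw [Real.div_rpow hr.le (by norm_num : (0:ℝ) ≤ 2), hE, hT2,
        mul_div_mul_left _ _ (two_ne_zero)]
    rw [e1, e2, ← hA] at hbern
    -- A ≤ B/T
    have hAle : A ≤ B / T := by
      rw [hA, ← e1]
      exact Real.rpow_le_rpow hρ0 hnear (by linarith)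
    -- (γ-1) * C₁ * (1 + B/T) = B * δ
    have hCeq : (γ - 1) * C₁ * (1 + B / T) = B * δ := by
      rw [hC₁]
      field_simp
    have hCmin : min C₁ C₂ ≤ C₁ := min_le_left _ _
    have h1A : 0 < 1 + A := by linarith
    have step1 : min C₁ C₂ * (1 + A) * (γ - 1) ≤ B * δ := by
      calc min C₁ C₂ * (1 + A) * (γ - 1) ≤ C₁ * (1 + B / T) * (γ - 1) := by
            apply mul_le_mul_of_nonneg_right _ hγ1.le
            apply mul_le_mul hCmin (by linarith) h1A.le hC₁0.le
        _ = B * δ := by rw [← hCeq]; ring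
    refine le_trans step1 ?_
    -- B * δ ≤ A - B - γE(ρ - r)
    rw [hδdef]
    -- from hbern : B/T + γ * (2E/T) * (ρ - r/2) ≤ A,  ρ ≤ r/2, B = rE
    have hgeom : 0 ≤ (T - 2) * (r / 2 - ρ) :=
      mul_nonneg (by linarith) (by linarith)
    have h3 : 0 ≤ γ * E * (2 * ρ / T - r / T - ρ + r / 2) := by
      have heq : 2 * ρ / T - r / T - ρ + r / 2 = (T - 2) * (r / 2 - ρ) / T := by
        field_simp; ring
      rw [heq]
      positivity
    have final : B / T + γ * (2 * E / T) * (ρ - r / 2) - B - γ * E * (ρ - r)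
        - B * (γ / 2 - 1 + 1 / T) = γ * E * (2 * ρ / T - r / T - ρ + r / 2) := by
      rw [hBrE]; field_simp; ring
    linarith [hbern, h3, final]
  · -- far field : 2r ≤ ρ
    have hbern := bern hγ (by positivity : (0:ℝ) < 2 * r) hρ0
    have e1 : (2 * r) ^ γ = T * B := by
      rw [hB, hT, ← Real.mul_rpow (by norm_num) hr.le]
    have e2 : (2 * r) ^ (γ - 1) = T * E / 2 := by
      rw [hE, Real.mul_rpow (by norm_num : (0:ℝ) ≤ 2) hr.le, hT2]
      ring
    rw [e1, e2, ← hA] at hbern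
    have hTBle : T * B ≤ A := by
      rw [hA, ← e1]
      exact Real.rpow_le_rpow (by positivity) hfar (by linarith)
    have hCeq : (γ - 1) * C₂ * (1 + 1 / (T * B)) = κ := by
      rw [hC₂]
      field_simp
    have hCmin : min C₁ C₂ ≤ C₂ := min_le_right _ _
    have h1A : 0 < 1 + A := by linarith
    have hAineq : 1 + A ≤ (1 + 1 / (T * B)) * A := by
      have h1 : 1 ≤ A / (T * B) := (one_le_div (by positivity)).mpr hTBle
      have h2 : (1 + 1 / (T * B)) * A = A + A / (T * B) := by ring
      linarith
    have step1 : min C₁ C₂ * (1 + A) * (γ - 1) ≤ κ * A := by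
      calc min C₁ C₂ * (1 + A) * (γ - 1)
          ≤ C₂ * ((1 + 1 / (T * B)) * A) * (γ - 1) := by
            apply mul_le_mul_of_nonneg_right _ hγ1.le
            apply mul_le_mul hCmin hAineq h1A.le hC₂0.le
        _ = (γ - 1) * C₂ * (1 + 1 / (T * B)) * A := by ring
        _ = κ * A := by rw [hCeq]
    refine le_trans step1 ?_
    -- κ A ≤ A - B - γE(ρ - r)
    rw [hκdef]
    -- hbern : T*B + γ*(T*E/2)*(ρ - 2r) ≤ A ; 2r ≤ ρ; B = rE
    have hmul := mul_le_mul_of_nonneg_left hbern (by positivity : (0:ℝ) ≤ (1 + γ) / T)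
    have expand : (1 + γ) / T * (T * B + γ * (T * E / 2) * (ρ - 2 * r))
        = (1 + γ) * B + (1 + γ) * γ * (E / 2) * (ρ - 2 * r) := by
      field_simp
    rw [expand] at hmul
    have id1 : A - B - γ * E * (ρ - r) - (T - 1 - γ) / T * A
        = (1 + γ) / T * A - B - γ * E * (ρ - r) := by
      field_simp; ring
    have id2 : (1 + γ) * B + (1 + γ) * γ * (E / 2) * (ρ - 2 * r) - B - γ * E * (ρ - r)
        = γ * (γ - 1) * E * (ρ / 2 - r) := by
      rw [hBrE]; ring
    have h3 : 0 ≤ γ * (γ - 1) * E * (ρ / 2 - r) := by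
      apply mul_nonneg _ (by linarith)
      positivity
    linarith [hmul, id1, id2, h3]
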